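/- Fix α with 0 < α < 1 and a natural number m ≥ 1. Define φ(n, m) = 2 ∑_{k=1}^{m} k² Δ_k(α) + 2m ∑_{k=m+1}^{n} k Δ_k(α) + 2 m n ∑_{k=n+1}^∞ Δ_k(α). Then as n → ∞ with m fixed, φ(n, m) is asymptotic to (2m/(1−α)) n^(1−α). -/

import Mathlib

/-!
Writing `g j = 1 - ℓ⁺_j(α) = (j + 2^(1/α))^(-α)`, the increments are `Δ_k = g (k - 1) - g k`.
The tail series therefore telescopes to `g n`, and summation by parts turns the middle sum into
`(m + 1) g m - (n + 1) g n + ∑_{k=m+1}^n g k`. Hence `φ(n, m)` equals `2m ∑_{k=m+1}^n g k` up to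
a bounded error. By concavity of `x ↦ x^(1-α)`, the term `(1 - α) (k + c)^(-α)` with
`c = 2^(1/α)` lies between `(k + 1 + c)^(1-α) - (k + c)^(1-α)` and `(k + c)^(1-α) - (k - 1 + c)^(1-α)`,
so `(1 - α) ∑_{k=m+1}^n g k` is squeezed between two telescoped differences, each `~ n^(1-α)`.
-/

open Filter Topology

/-- ℓ⁺_m(α) = 1 - (m + 2^(1/α))^(-α) -/
noncomputable def ellp (α : ℝ) (m : ℕ) : ℝ := 1 - ((m : ℝ) + (2 : ℝ) ^ (1/α)) ^ (-α)

/-- Δ_k(α) = ℓ⁺_k(α) - ℓ⁺_{k-1}(α) -/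
noncomputable def Dlt (α : ℝ) (k : ℕ) : ℝ := ellp α k - ellp α (k - 1)

/-- Position-position auto-correlation of the Slicer Map, for times m ≤ n. -/
noncomputable def phi (α : ℝ) (n m : ℕ) : ℝ :=
  2 * ∑ k ∈ Finset.Icc 1 m, (k : ℝ) ^ 2 * Dlt α k
    + 2 * m * ∑ k ∈ Finset.Icc (m + 1) n, (k : ℝ) * Dlt α k
    + 2 * m * n * ∑' k : ℕ, Dlt α (n + 1 + k)

open Finset

lemma Finset.sum_Icc_sub_pred {M : Type*} [AddCommGroup M] (g : ℕ → M) {m n : ℕ} (h : m ≤ n) :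
    ∑ k ∈ Icc (m + 1) n, (g k - g (k - 1)) = g n - g m := by
  induction n, h using Nat.le_induction with
  | base => simp
  | succ n hmn ih =>
    rw [sum_Icc_succ_top (by omega), ih, Nat.add_sub_cancel]
    abel

lemma Finset.sum_Icc_mul_pred_sub {R : Type*} [CommRing R] (g : ℕ → R) {m n : ℕ} (h : m ≤ n) :
    ∑ k ∈ Icc (m + 1) n, (k : R) * (g (k - 1) - g k)
      = (m + 1) * g m - (n + 1) * g n + ∑ k ∈ Icc (m + 1) n, g k := by
  induction n, h using Nat.le_induction with
  | base => simp
  | succ n hmn ih =>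
    rw [sum_Icc_succ_top (by omega), sum_Icc_succ_top (by omega), ih, Nat.add_sub_cancel]
    push_cast
    ring

lemma hasSum_sub_succ_of_antitone {g : ℕ → ℝ} (hg : Antitone g) {l : ℝ}
    (hl : Tendsto g atTop (𝓝 l)) : HasSum (fun k => g k - g (k + 1)) (g 0 - l) := by
  refine (hasSum_iff_tendsto_nat_of_nonneg (fun k => sub_nonneg.2 (hg k.le_succ)) _).2 ?_
  simp_rw [sum_range_sub']
  exact tendsto_const_nhds.sub hl

lemma Real.rpow_add_le_add_mul_rpow_sub_one {x s q : ℝ} (hx : 0 < x) (hxs : 0 ≤ x + s)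
    (hq0 : 0 ≤ q) (hq1 : q ≤ 1) : (x + s) ^ q ≤ x ^ q + q * x ^ (q - 1) * s := by
  have hsx : -1 ≤ s / x := by rw [le_div_iff₀ hx]; linarith
  calc (x + s) ^ q = x ^ q * (1 + s / x) ^ q := by
        rw [← Real.mul_rpow hx.le (by linarith), mul_add, mul_one, mul_div_cancel₀ _ hx.ne']
    _ ≤ x ^ q * (1 + q * (s / x)) := by gcongr; exact rpow_one_add_le_one_add_mul_self hsx hq0 hq1
    _ = x ^ q + q * x ^ (q - 1) * s := by rw [Real.rpow_sub_one hx.ne']; field_simp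

section PowerSums

variable {q c : ℝ}

lemma rpow_sub_rpow_le_mul_sum_Icc (hq0 : 0 ≤ q) (hq1 : q ≤ 1) (hc : 0 ≤ c) {m n : ℕ}
    (h : m ≤ n) :
    ((n : ℝ) + 1 + c) ^ q - ((m : ℝ) + 1 + c) ^ q
      ≤ q * ∑ k ∈ Icc (m + 1) n, ((k : ℝ) + c) ^ (q - 1) := by
  have hstep : ∀ k ∈ Icc (m + 1) n, ((k : ℝ) + 1 + c) ^ q - (((k - 1 : ℕ) : ℝ) + 1 + c) ^ q
      ≤ q * ((k : ℝ) + c) ^ (q - 1) := by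
    intro k hk
    have hk1 : 1 ≤ k := by simp only [mem_Icc] at hk; omega
    have hx : (0 : ℝ) < k + c := by positivity
    have := Real.rpow_add_le_add_mul_rpow_sub_one hx (by linarith) hq0 hq1 (s := 1)
    rw [Nat.cast_sub hk1, Nat.cast_one, sub_add_cancel, add_right_comm]
    linarith
  rw [← sum_Icc_sub_pred (fun j : ℕ => ((j : ℝ) + 1 + c) ^ q) h, mul_sum]
  exact sum_le_sum hstep

lemma mul_sum_Icc_le_rpow_sub_rpow (hq0 : 0 ≤ q) (hq1 : q ≤ 1) (hc : 0 ≤ c) {m n : ℕ}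
    (h : m ≤ n) :
    q * ∑ k ∈ Icc (m + 1) n, ((k : ℝ) + c) ^ (q - 1)
      ≤ ((n : ℝ) + c) ^ q - ((m : ℝ) + c) ^ q := by
  have hstep : ∀ k ∈ Icc (m + 1) n,
      q * ((k : ℝ) + c) ^ (q - 1) ≤ ((k : ℝ) + c) ^ q - (((k - 1 : ℕ) : ℝ) + c) ^ q := by
    intro k hk
    have hk1 : (1 : ℝ) ≤ k := by simp only [mem_Icc] at hk; exact_mod_cast (by omega : 1 ≤ k)
    have hx : (0 : ℝ) < k + c := by linarith
    have := Real.rpow_add_le_add_mul_rpow_sub_one hx (by linarith) hq0 hq1 (s := -1)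
    rw [← sub_eq_add_neg] at this
    rw [Nat.cast_sub (by exact_mod_cast hk1), Nat.cast_one, sub_add_eq_add_sub]
    linarith
  rw [← sum_Icc_sub_pred (fun j : ℕ => ((j : ℝ) + c) ^ q) h, mul_sum]
  exact sum_le_sum hstep

lemma tendsto_rpow_add_sub_div_rpow (d K : ℝ) (hd : 0 ≤ d) (hq : 0 < q) :
    Tendsto (fun n : ℕ => (((n : ℝ) + d) ^ q - K) / (n : ℝ) ^ q) atTop (𝓝 1) := by
  have hpow : Tendsto (fun n : ℕ => (n : ℝ) ^ q) atTop atTop :=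
    (tendsto_rpow_atTop hq).comp tendsto_natCast_atTop_atTop
  have hratio : Tendsto (fun n : ℕ => ((n : ℝ) + d) ^ q / (n : ℝ) ^ q) atTop (𝓝 1) := by
    have hbase : Tendsto (fun n : ℕ => 1 + d / (n : ℝ)) atTop (𝓝 1) := by
      simpa using tendsto_const_nhds.add (tendsto_const_div_atTop_nhds_zero_nat d)
    have h := hbase.rpow_const (p := q) (Or.inl one_ne_zero)
    rw [Real.one_rpow] at h
    refine h.congr' ?_
    filter_upwards [eventually_gt_atTop 0] with n hn
    have hn' : (0 : ℝ) < n := by exact_mod_cast hn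
    rw [← Real.div_rpow (by positivity) hn'.le, add_div, div_self hn'.ne']
  have hK : Tendsto (fun n : ℕ => K / (n : ℝ) ^ q) atTop (𝓝 0) :=
    tendsto_const_nhds.div_atTop hpow
  simpa [sub_div] using hratio.sub hK

lemma tendsto_mul_sum_Icc_rpow_div (hq0 : 0 < q) (hq1 : q ≤ 1) (hc : 0 ≤ c) (m : ℕ) :
    Tendsto (fun n : ℕ => (q * ∑ k ∈ Icc (m + 1) n, ((k : ℝ) + c) ^ (q - 1)) / (n : ℝ) ^ q)
      atTop (𝓝 1) := by
  refine tendsto_of_tendsto_of_tendsto_of_le_of_le'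
    (tendsto_rpow_add_sub_div_rpow (1 + c) (((m : ℝ) + 1 + c) ^ q) (by linarith) hq0)
    (tendsto_rpow_add_sub_div_rpow c (((m : ℝ) + c) ^ q) hc hq0) ?_ ?_
  all_goals
    filter_upwards [eventually_ge_atTop m, eventually_gt_atTop 0] with n hmn hn
    have : (0 : ℝ) < (n : ℝ) ^ q := Real.rpow_pos_of_pos (by exact_mod_cast hn) q
    gcongr
  · rw [← add_assoc]; exact rpow_sub_rpow_le_mul_sum_Icc hq0.le hq1 hc hmn
  · exact mul_sum_Icc_le_rpow_sub_rpow hq0.le hq1 hc hmn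

end PowerSums

noncomputable def ellpCompl (α : ℝ) (j : ℕ) : ℝ := 1 - ellp α j

section SlicerMap

variable {α : ℝ}

lemma ellpCompl_eq (α : ℝ) (j : ℕ) : ellpCompl α j = ((j : ℝ) + 2 ^ (1 / α)) ^ (-α) :=
  sub_sub_cancel _ _

lemma Dlt_eq_sub (α : ℝ) (k : ℕ) : Dlt α k = ellpCompl α (k - 1) - ellpCompl α k := by
  unfold Dlt ellpCompl
  ring

lemma antitone_ellpCompl (hα : 0 < α) : Antitone (ellpCompl α) := by
  intro i j hij
  simp only [ellpCompl_eq]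
  exact Real.rpow_le_rpow_of_nonpos (by positivity) (by gcongr) (by linarith)

lemma tendsto_ellpCompl (hα : 0 < α) : Tendsto (ellpCompl α) atTop (𝓝 0) := by
  simp only [funext (ellpCompl_eq α)]
  exact (tendsto_rpow_neg_atTop hα).comp
    (tendsto_atTop_add_const_right _ _ tendsto_natCast_atTop_atTop)

lemma tsum_Dlt_add (hα : 0 < α) (n : ℕ) : ∑' k : ℕ, Dlt α (n + 1 + k) = ellpCompl α n := by
  have hsum := hasSum_sub_succ_of_antitone
    (fun i j hij => antitone_ellpCompl hα (Nat.add_le_add_right hij n))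
    ((tendsto_ellpCompl hα).comp (tendsto_add_atTop_nat n))
  simp only [zero_add, sub_zero] at hsum
  refine Eq.trans (tsum_congr fun k => ?_) hsum.tsum_eq
  rw [Dlt_eq_sub]
  congr 2 <;> omega

lemma phi_eq (hα : 0 < α) {m n : ℕ} (h : m ≤ n) :
    phi α n m = 2 * ∑ k ∈ Icc 1 m, (k : ℝ) ^ 2 * Dlt α k
      + 2 * m * (m + 1) * ellpCompl α m - 2 * m * ellpCompl α n
      + 2 * m * ∑ k ∈ Icc (m + 1) n, ellpCompl α k := by
  have hmid := sum_Icc_mul_pred_sub (ellpCompl α) h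
  simp only [← Dlt_eq_sub] at hmid
  rw [phi, hmid, tsum_Dlt_add hα]
  ring

end SlicerMap

theorem stmt_15 (α : ℝ) (hα : 0 < α) (hα1 : α < 1) (m : ℕ) (hm : 1 ≤ m) :
    Tendsto
      (fun n : ℕ => phi α n m / ((2 * m / (1 - α)) * (n : ℝ) ^ ((1 : ℝ) - α)))
      atTop (𝓝 1) := by
  have hq : 0 < 1 - α := by linarith
  have hm0 : (0 : ℝ) < m := by exact_mod_cast hm
  set C := 2 * ∑ k ∈ Icc 1 m, (k : ℝ) ^ 2 * Dlt α k + 2 * m * (m + 1) * ellpCompl α m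
  have hbounded : Tendsto (fun n => (1 - α) * (C - 2 * m * ellpCompl α n) / (2 * m)) atTop
      (𝓝 ((1 - α) * (C - 2 * m * 0) / (2 * m))) :=
    ((tendsto_const_nhds.sub ((tendsto_ellpCompl hα).const_mul _)).const_mul _).div_const _
  have hsum :=
    tendsto_mul_sum_Icc_rpow_div hq (by linarith) (by positivity : (0 : ℝ) ≤ 2 ^ (1 / α)) m
  simp only [sub_sub_cancel_left, ← ellpCompl_eq] at hsum
  have hlim := (hbounded.div_atTop
    ((tendsto_rpow_atTop hq).comp tendsto_natCast_atTop_atTop)).add hsum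
  rw [zero_add] at hlim
  refine hlim.congr' ?_
  filter_upwards [eventually_ge_atTop m, eventually_gt_atTop 0] with n hmn hn
  have : (0 : ℝ) < (n : ℝ) ^ (1 - α) := Real.rpow_pos_of_pos (by exact_mod_cast hn) _
  simp only [Function.comp_apply, phi_eq hα hmn]
  field_simp
  ring
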